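/- The 2-gathering formation problem has a single equivalence class under the transitive closure of the 1-neighborhood relation: for any two multisets P and P' of cardinality n+1 over ℝ², each supported on at most two distinct points, there is a finite chain P = P₀, P₁, …, P_k = P' of multisets of cardinality n+1, each supported on at most two points, such that consecutive multisets share a common sub-multiset of cardinality at least n. -/
import Mathlib


noncomputable abbrev Pt : Type := EuclideanSpace ℝ (Fin 2)

/-- A 2-gathering pattern of cardinality `n+1`. -/
def TwoGat (n : ℕ) (P : Multiset Pt) : Prop :=
  Multiset.card P = n + 1 ∧ ∃ x₀ x₁ : Pt, ∀ v ∈ P, v = x₀ ∨ v = x₁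

open Classical

def GatChain (n : ℕ) (P P' : Multiset Pt) : Prop :=
  ∃ (k : ℕ) (Q : ℕ → Multiset Pt),
    Q 0 = P ∧ Q k = P' ∧
    (∀ i ≤ k, TwoGat n (Q i)) ∧
    (∀ i < k, n ≤ Multiset.card (Q i ∩ Q (i + 1)))

lemma GatChain.trans {n : ℕ} {P P' P'' : Multiset Pt}
    (h1 : GatChain n P P') (h2 : GatChain n P' P'') : GatChain n P P'' := by
  obtain ⟨k, Q, hQ0, hQk, hTG, hI⟩ := h1
  obtain ⟨k', Q', hQ0', hQk', hTG', hI'⟩ := h2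
  refine ⟨k + k', fun i => if i ≤ k then Q i else Q' (i - k), by simp [hQ0], ?_, ?_, ?_⟩
  · by_cases h : k' = 0
    · subst h
      simp only [add_zero, le_refl, if_pos]
      rw [hQk, ← hQ0']; exact hQk'
    · have h2 : ¬ (k + k' ≤ k) := by omega
      simp only [if_neg h2, Nat.add_sub_cancel_left, hQk']
  · intro i hi
    by_cases h : i ≤ k
    · simpa [h] using hTG i h
    · have : i - k ≤ k' := by omega
      simpa [h] using hTG' _ this
  · intro i hi
    by_cases h : i ≤ k
    · by_cases h' : i + 1 ≤ k
      · simpa [h, h'] using hI i (by omega)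
      · have hik : i = k := by omega
        by_cases hk' : k' = 0
        · omega
        · have h1' : Q' (i + 1 - k) = Q' 1 := by rw [hik]; simp
          have : Q i ∩ Q' (i + 1 - k) = Q' 0 ∩ Q' 1 := by
            rw [h1', hik, hQk, ← hQ0']
          simp only [h, if_pos, if_neg (by omega : ¬ i + 1 ≤ k)]
          rw [this]
          simpa using hI' 0 (by omega)
    · have h' : ¬ i + 1 ≤ k := by omega
      have : i + 1 - k = (i - k) + 1 := by omega
      simp only [if_neg h, if_neg h', this]
      exact hI' (i - k) (by omega)

lemma GatChain.symm {n : ℕ} {P P' : Multiset Pt}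
    (h : GatChain n P P') : GatChain n P' P := by
  obtain ⟨k, Q, hQ0, hQk, hTG, hI⟩ := h
  refine ⟨k, fun i => Q (k - i), by simp [hQk], by simp [hQ0], ?_, ?_⟩
  · intro i hi; exact hTG _ (by omega)
  · intro i hi
    have h1 : k - i = (k - (i + 1)) + 1 := by omega
    show n ≤ Multiset.card (Q (k - i) ∩ Q (k - (i + 1)))
    rw [Multiset.inter_comm, h1]
    exact hI _ (by omega)

lemma chain_to_const {n : ℕ} (a b : Pt) (p q : ℕ) (hpq : p + q = n + 1) :
    GatChain n (Multiset.replicate p a + Multiset.replicate q b)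
      (Multiset.replicate (n + 1) a) := by
  refine ⟨q, fun i => Multiset.replicate (p + min i q) a + Multiset.replicate (q - min i q) b,
    by simp, by simp [hpq], ?_, ?_⟩
  · intro i hi
    constructor
    · simp only [Multiset.card_add, Multiset.card_replicate]
      omega
    · exact ⟨a, b, by intro v hv; rcases Multiset.mem_add.1 hv with h | h <;>
        [left; right] <;> exact Multiset.eq_of_mem_replicate h⟩
  · intro i hi
    show n ≤ Multiset.card
      ((Multiset.replicate (p + min i q) a + Multiset.replicate (q - min i q) b) ∩
       (Multiset.replicate (p + min (i + 1) q) a + Multiset.replicate (q - min (i + 1) q) b))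
    have hmi : min i q = i := by omega
    have hmi1 : min (i + 1) q = i + 1 := by omega
    set S := Multiset.replicate (p + i) a + Multiset.replicate (q - (i + 1)) b with hS
    have hle1 : S ≤ Multiset.replicate (p + min i q) a + Multiset.replicate (q - min i q) b := by
      rw [hmi]
      exact add_le_add (le_refl _)
        ((Multiset.replicate_le_replicate b).2 (by omega))
    have hle2 : S ≤ Multiset.replicate (p + min (i+1) q) a +
        Multiset.replicate (q - min (i+1) q) b := by
      rw [hmi1]
      exact add_le_add ((Multiset.replicate_le_replicate a).2 (by omega)) (le_refl _)
    have := Multiset.le_inter hle1 hle2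
    have hcard := Multiset.card_le_card this
    simp only [hS, Multiset.card_add, Multiset.card_replicate] at hcard
    omega

lemma twoGat_decomp {n : ℕ} {P : Multiset Pt} (hP : TwoGat n P) :
    ∃ (a b : Pt) (p q : ℕ), p + q = n + 1 ∧
      P = Multiset.replicate p a + Multiset.replicate q b := by
  obtain ⟨hcard, a, b, hab⟩ := hP
  classical
  have hsplit := Multiset.filter_add_not (fun v => v = a) P
  set P₁ := P.filter (fun v => v = a) with hP₁
  set P₂ := P.filter (fun v => ¬ v = a) with hP₂
  have h1 : P₁ = Multiset.replicate (Multiset.card P₁) a := by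
    rw [Multiset.eq_replicate_card]
    intro v hv; exact (Multiset.mem_filter.1 hv).2
  have h2 : P₂ = Multiset.replicate (Multiset.card P₂) b := by
    rw [Multiset.eq_replicate_card]
    intro v hv
    obtain ⟨hvP, hva⟩ := Multiset.mem_filter.1 hv
    rcases hab v hvP with h | h
    · exact absurd h hva
    · exact h
  refine ⟨a, b, Multiset.card P₁, Multiset.card P₂, ?_, ?_⟩
  · have : Multiset.card P₁ + Multiset.card P₂ = Multiset.card P := by
      rw [← Multiset.card_add, hsplit]
    omega
  · rw [← h1, ← h2, hsplit]

open Classical in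
theorem two_gathering_single_class
    (n : ℕ) (hn : 1 ≤ n)
    (P P' : Multiset Pt) (hP : TwoGat n P) (hP' : TwoGat n P') :
    ∃ (k : ℕ) (Q : ℕ → Multiset Pt),
      Q 0 = P ∧ Q k = P' ∧
      (∀ i ≤ k, TwoGat n (Q i)) ∧
      (∀ i < k, n ≤ Multiset.card (Q i ∩ Q (i + 1))) := by
  obtain ⟨a, b, p, q, hpq, hPd⟩ := twoGat_decomp hP
  obtain ⟨a', b', p', q', hpq', hPd'⟩ := twoGat_decomp hP'
  have c1 : GatChain n P (Multiset.replicate (n + 1) a) := hPd ▸ chain_to_const a b p q hpq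
  have c2 : GatChain n (Multiset.replicate (n + 1) a) (Multiset.replicate (n + 1) a') := by
    have := chain_to_const (n := n) a' a 0 (n + 1) (by omega)
    simpa using this
  have c3 : GatChain n (Multiset.replicate (n + 1) a') P' :=
    (hPd' ▸ chain_to_const a' b' p' q' hpq').symm
  exact (c1.trans c2).trans c3
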